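/- arXiv:2301.02833 — 10 statements merged into one kernel-verified Lean document; each statement's English description precedes it below -/
import Mathlib

section
/- For every colouring c : ℚ → Fin n of the rationals with finitely many colours, there exist rationals u < v such that the open interval (u,v) is a c-shuffle, i.e. every colour that occurs at some point of (u,v) occurs densely in (u,v). -/
open Set

section Shuffle

variable {α β : Type*} [Preorder α]

def IsShuffle (c : α → β) (I : Set α) : Prop :=
  ∀ i ∈ c '' I, ∀ x ∈ I, ∀ y ∈ I, x < y → ∃ z ∈ Ioo x y, c z = i

/-- With finitely many colours, an interval whose set of colours is minimal under inclusion is a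
shuffle: each subinterval has no more colours, hence all of them. -/
theorem exists_isShuffle_Ioo [Finite β] (c : α → β) {a b : α} (hab : a < b) :
    ∃ u v, u < v ∧ IsShuffle c (Ioo u v) := by
  obtain ⟨s, ⟨u, v, huv, rfl⟩, hmin⟩ :=
    exists_minimal_of_wellFoundedLT (fun s : Set β ↦ ∃ u v, u < v ∧ c '' Ioo u v = s)
      ⟨_, a, b, hab, rfl⟩
  refine ⟨u, v, huv, fun i hi x hx y hy hxy ↦ ?_⟩
  have hsub : c '' Ioo x y ⊆ c '' Ioo u v :=
    image_mono fun z hz ↦ ⟨hx.1.trans hz.1, hz.2.trans hy.2⟩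
  exact hmin ⟨x, y, hxy, rfl⟩ hsub hi

end Shuffle

/-- every colouring of ℚ with finitely many colours admits an open
interval (u,v) which is a c-shuffle: every colour occurring in (u,v) occurs densely. -/
theorem shuffle_principle (n : ℕ) (c : ℚ → Fin n) :
    ∃ u v : ℚ, u < v ∧
      ∀ i : Fin n, (∃ z, u < z ∧ z < v ∧ c z = i) →
        ∀ x y : ℚ, u < x → x < y → y < v → ∃ z, x < z ∧ z < y ∧ c z = i := by
  obtain ⟨u, v, huv, hshuffle⟩ := exists_isShuffle_Ioo c zero_lt_one
  refine ⟨u, v, huv, fun i ⟨z, huz, hzv, hz⟩ x y hux hxy hyv ↦ ?_⟩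
  obtain ⟨w, ⟨hxw, hwy⟩, hw⟩ :=
    hshuffle i ⟨z, ⟨huz, hzv⟩, hz⟩ x ⟨hux, hxy.trans hyv⟩ y ⟨hux.trans hxy, hyv⟩ hxy
  exact ⟨w, hxw, hwy, hw⟩
end

section
/- Let c : ℚ → Fin n be a colouring. Suppose u < v are rationals and L ⊆ Fin n is a set of colours such that c(w) ∈ L for all w ∈ (u,v), and L has minimal cardinality among all sets of colours with this property (over all nonempty open rational intervals). Then (u,v) is a c-shuffle: every colour of L that occurs in (u,v) occurs densely in (u,v). -/
theorem minimal_palette_shuffle_general (n : ℕ) (c : ℚ → Fin n) (u v : ℚ) (L : Finset (Fin n))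
    (hL : ∀ w : ℚ, u < w → w < v → c w ∈ L)
    (hmin : ¬ ∃ (u' v' : ℚ) (L' : Finset (Fin n)), u' < v' ∧ L'.card < L.card ∧
        ∀ w : ℚ, u' < w → w < v' → c w ∈ L') :
    ∀ i : Fin n, (∃ z, u < z ∧ z < v ∧ c z = i) →
      ∀ x y : ℚ, u < x → x < y → y < v → ∃ z, x < z ∧ z < y ∧ c z = i := by
  rintro i ⟨z, huz, hzv, rfl⟩ x y hux hxy hyv
  by_contra! hgap
  -- a gap of colour `c z` in `(x, y)` leaves the smaller palette `L.erase (c z)` there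
  refine hmin ⟨x, y, L.erase (c z), hxy, Finset.card_erase_lt_of_mem (hL z huz hzv), ?_⟩
  exact fun w hxw hwy => Finset.mem_erase.2 ⟨hgap w hxw hwy, hL w (hux.trans hxw) (hwy.trans hyv)⟩

/-- if (u,v) realizes a minimal-cardinality palette L, then (u,v) is a
c-shuffle. -/
theorem minimal_palette_shuffle (n : ℕ) (c : ℚ → Fin n) (u v : ℚ) (L : Finset (Fin n))
    (huv : u < v)
    (hL : ∀ w : ℚ, u < w → w < v → c w ∈ L)
    (hmin : ¬ ∃ (u' v' : ℚ) (L' : Finset (Fin n)), u' < v' ∧ L'.card < L.card ∧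
        ∀ w : ℚ, u' < w → w < v' → c w ∈ L') :
    ∀ i : Fin n, (∃ z, u < z ∧ z < v ∧ c z = i) →
      ∀ x y : ℚ, u < x → x < y → y < v → ∃ z, x < z ∧ z < y ∧ c z = i :=
  minimal_palette_shuffle_general n c u v L hL hmin
end

section
/- Let (P, ≤) be a finite partial order and c : {(x,y) ∈ ℚ × ℚ | x < y} → P be an ordered colouring, meaning c(x,y) ≤ c(x',y') whenever x' ≤ x < y ≤ y'. Then there exist rationals u < v such that c is constant on pairs from the open interval (u,v). -/
/-! Take a pair `u < v` whose colour is minimal (it exists because `P` is finite). Every pair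
inside `(u, v)` is nested in `(u, v)`, so its colour is at most `c u v`, hence equal to it. -/

theorem exists_lt_forall_inside_colour_eq {α P : Type*} [Preorder α] [PartialOrder P]
    [WellFoundedLT P] (c : α → α → P)
    (hord : ∀ x y x' y' : α, x' ≤ x → x < y → y ≤ y' → c x y ≤ c x' y') {a b : α} (hab : a < b) :
    ∃ u v : α, u < v ∧ ∀ x y : α, u < x → x < y → y < v → c x y = c u v := by
  obtain ⟨⟨u, v⟩, huv, hmin⟩ := exists_minimalFor_of_wellFoundedLT
    (fun p : α × α => p.1 < p.2) (fun p => c p.1 p.2) ⟨(a, b), hab⟩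
  refine ⟨u, v, huv, fun x y hux hxy hyv => ?_⟩
  have hle : c x y ≤ c u v := hord x y u v hux.le hxy hyv.le
  exact hle.antisymm (hmin (j := (x, y)) hxy hle)

/-- ordered Ramsey theorem over ℚ: every ordered colouring of pairs of
rationals by a finite poset admits a homogeneous open interval. -/
theorem ordered_ramsey_Q (P : Type*) [PartialOrder P] [Fintype P]
    (c : ℚ → ℚ → P)
    (hord : ∀ x y x' y' : ℚ, x' ≤ x → x < y → y ≤ y' → c x y ≤ c x' y') :
    ∃ u v : ℚ, u < v ∧
      ∀ x y x' y' : ℚ, u < x → x < y → y < v → u < x' → x' < y' → y' < v →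
        c x y = c x' y' := by
  obtain ⟨u, v, huv, hconst⟩ := exists_lt_forall_inside_colour_eq c hord zero_lt_one
  exact ⟨u, v, huv, fun x y x' y' hux hxy hyv hux' hxy' hy'v =>
    (hconst x y hux hxy hyv).trans (hconst x' y' hux' hxy' hy'v).symm⟩
end

section
/- Let S be a finite semigroup and c : {(x,y) ∈ ℚ × ℚ | x < y} → S an additive colouring, i.e. c(x,z) = c(x,y) · c(y,z) whenever x < y < z. Then there exist rationals u < v such that all values c(x,y) with u < x < y < v are J-equivalent in S. -/
/- Among the colours c(x,y), x < y, of the finite semigroup pick one, c(u,v), that is maximal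
for the J-preorder. Every c(x,y) with u < x < y < v is a factor c(u,x) · c(x,y) · c(y,v) of c(u,v),
so it lies J-above c(u,v), and by maximality it is J-equivalent to it. -/

/-- Green's J-preorder on a semigroup. -/
def leJ {S : Type*} [Semigroup S] (s t : S) : Prop :=
  s = t ∨ (∃ a, s = t * a) ∨ (∃ a, s = a * t) ∨ (∃ a b, s = a * t * b)

/-- Green's J-equivalence. -/
def eqJ {S : Type*} [Semigroup S] (s t : S) : Prop := leJ s t ∧ leJ t s

lemma leJ_refl {S : Type*} [Semigroup S] (s : S) : leJ s s := Or.inl rfl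

lemma leJ_iff_withOne {S : Type*} [Semigroup S] {s t : S} :
    leJ s t ↔ ∃ a b : WithOne S, (s : WithOne S) = a * t * b := by
  constructor
  · rintro (rfl | ⟨a, rfl⟩ | ⟨a, rfl⟩ | ⟨a, b, rfl⟩)
    · exact ⟨1, 1, by simp⟩
    · exact ⟨1, a, by simp⟩
    · exact ⟨a, 1, by simp⟩
    · exact ⟨a, b, by simp [mul_assoc]⟩
  · rintro ⟨a, b, h⟩
    induction a using WithOne.recOneCoe <;> induction b using WithOne.recOneCoe <;>
      simp only [one_mul, mul_one, ← WithOne.coe_mul, WithOne.coe_inj] at h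
    · exact Or.inl h
    · exact Or.inr (Or.inl ⟨_, h⟩)
    · exact Or.inr (Or.inr (Or.inl ⟨_, h⟩))
    · exact Or.inr (Or.inr (Or.inr ⟨_, _, h⟩))

lemma leJ_trans {S : Type*} [Semigroup S] {s t u : S} (hst : leJ s t) (htu : leJ t u) :
    leJ s u := by
  rw [leJ_iff_withOne] at *
  obtain ⟨a, b, hst⟩ := hst
  obtain ⟨p, q, htu⟩ := htu
  exact ⟨a * p, q * b, by rw [hst, htu]; simp only [mul_assoc]⟩

lemma eqJ_symm {S : Type*} [Semigroup S] {s t : S} (h : eqJ s t) : eqJ t s := h.symm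

lemma eqJ_trans {S : Type*} [Semigroup S] {s t u : S} (hst : eqJ s t) (htu : eqJ t u) :
    eqJ s u :=
  ⟨leJ_trans hst.1 htu.1, leJ_trans htu.2 hst.2⟩

abbrev jPreorder (S : Type*) [Semigroup S] : Preorder S where
  le := leJ
  le_refl := leJ_refl
  le_trans _ _ _ := leJ_trans

lemma leJ_of_additive_of_lt {α S : Type*} [LinearOrder α] [Semigroup S] {c : α → α → S}
    (hadd : ∀ x y z : α, x < y → y < z → c x z = c x y * c y z)
    {u x y v : α} (hux : u < x) (hxy : x < y) (hyv : y < v) : leJ (c u v) (c x y) := by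
  refine Or.inr (Or.inr (Or.inr ⟨c u x, c y v, ?_⟩))
  rw [hadd u x v hux (hxy.trans hyv), hadd x y v hxy hyv, mul_assoc]

theorem exists_eqJ_of_additive {α S : Type*} [LinearOrder α] [Nontrivial α]
    [Semigroup S] [Finite S] (c : α → α → S)
    (hadd : ∀ x y z : α, x < y → y < z → c x z = c x y * c y z) :
    ∃ u v : α, u < v ∧ ∀ x y : α, u < x → x < y → y < v → eqJ (c u v) (c x y) := by
  let := jPreorder S
  obtain ⟨a, b, hab⟩ := exists_pair_lt α
  obtain ⟨⟨u, v⟩, huv, hmax⟩ := Set.Finite.exists_maximalFor' (fun p : α × α => c p.1 p.2)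
    {p | p.1 < p.2} (Set.toFinite _) ⟨(a, b), hab⟩
  refine ⟨u, v, huv, fun x y hux hxy hyv => ?_⟩
  have hle : leJ (c u v) (c x y) := leJ_of_additive_of_lt hadd hux hxy hyv
  exact ⟨hle, hmax (show (x, y) ∈ {p : α × α | p.1 < p.2} from hxy) hle⟩

/-- for an additive colouring of pairs of rationals by a finite semigroup,
there is an interval on which all colours are J-equivalent. -/
theorem additive_interval_single_Jclass (S : Type*) [Semigroup S] [Fintype S]
    (c : ℚ → ℚ → S)
    (hadd : ∀ x y z : ℚ, x < y → y < z → c x z = c x y * c y z) :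
    ∃ u v : ℚ, u < v ∧
      ∀ x y x' y' : ℚ, u < x → x < y → y < v → u < x' → x' < y' → y' < v →
        eqJ (c x y) (c x' y') := by
  obtain ⟨u, v, huv, hJ⟩ := exists_eqJ_of_additive c hadd
  exact ⟨u, v, huv, fun x y x' y' hux hxy hyv hux' hxy' hyv' =>
    eqJ_trans (eqJ_symm (hJ x y hux hxy hyv)) (hJ x' y' hux' hxy' hyv')⟩
end

section
/- Let S be a finite semigroup and c : {(x,y) ∈ ℚ × ℚ | x < y} → S an additive colouring. Then there exist rationals x < y and a finite partition of the open interval (x,y) into sets D₁, …, D_k, each dense in (x,y), such that each D_i is c-homogeneous: c takes at most one value on pairs (a,b) with a, b ∈ D_i and a < b. -/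
/-!
Induct on the finite set `H` of colours met inside an interval. Fix `d₀ < d₁` and sort the points
`q` between them by the pair `(c d₀ q, c q d₁)`. For `a < b` in the class of `(s, t)`, additivity
gives `s * c a b = s` and `c a b * t = t`. So either the class uses fewer colours, or `s = t` is a
zero of `H`; in the latter case the class is homogeneous of colour `s`, or some `a < b` in it has
`c a b ≠ s`, and then `s` is no colour inside `(a, b)`, as `c a b = c a a' * (c a' b' * c b' b)`.
Shrinking the interval once per class gives a subinterval covered by finitely many homogeneous
sets; shrinking it once more so as to minimise the number of these sets that it meets makes each
of them dense.
-/

open Set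

section

variable {S : Type*}

section Definitions

variable (c : ℚ → ℚ → S)

def IsAdditive [Mul S] : Prop :=
  ∀ x y z, x < y → y < z → c x z = c x y * c y z

def colours (D : Set ℚ) : Set S :=
  {s | ∃ a ∈ D, ∃ b ∈ D, a < b ∧ c a b = s}

def IsHomogeneous (D : Set ℚ) : Prop :=
  (colours c D).Subsingleton

def HomogeneouslyCoverable (D : Set ℚ) : Prop :=
  ∃ F : Set (Set ℚ), F.Finite ∧ (∀ P ∈ F, IsHomogeneous c P) ∧ D ⊆ ⋃₀ F

def LocallyCoverable (H : Finset S) : Prop :=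
  ∀ (D : Set ℚ) (X Y : ℚ), X < Y → colours c (D ∩ Ioo X Y) ⊆ H →
    ∃ x y, X ≤ x ∧ x < y ∧ y ≤ Y ∧ HomogeneouslyCoverable c (D ∩ Ioo x y)

end Definitions

def DenseIn (D : Set ℚ) (x y : ℚ) : Prop :=
  ∀ a b, x < a → a < b → b < y → ∃ z ∈ D, a < z ∧ z < b

variable {c : ℚ → ℚ → S} {D E : Set ℚ}

theorem colours_mono (h : D ⊆ E) : colours c D ⊆ colours c E :=
  fun _ ⟨a, ha, b, hb, hab, hs⟩ => ⟨a, h ha, b, h hb, hab, hs⟩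

theorem IsHomogeneous.mono (hE : IsHomogeneous c E) (h : D ⊆ E) : IsHomogeneous c D :=
  hE.anti (colours_mono h)

theorem IsHomogeneous.eq (hD : IsHomogeneous c D) {a b a' b' : ℚ} (ha : a ∈ D) (hb : b ∈ D)
    (hab : a < b) (ha' : a' ∈ D) (hb' : b' ∈ D) (hab' : a' < b') : c a b = c a' b' :=
  hD ⟨a, ha, b, hb, hab, rfl⟩ ⟨a', ha', b', hb', hab', rfl⟩

theorem IsHomogeneous.homogeneouslyCoverable (hD : IsHomogeneous c D) :
    HomogeneouslyCoverable c D :=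
  ⟨{D}, finite_singleton D, by simpa using hD, by simp⟩

theorem HomogeneouslyCoverable.mono (hE : HomogeneouslyCoverable c E) (h : D ⊆ E) :
    HomogeneouslyCoverable c D :=
  let ⟨F, hfin, hhom, hcov⟩ := hE
  ⟨F, hfin, hhom, h.trans hcov⟩

theorem HomogeneouslyCoverable.union (hD : HomogeneouslyCoverable c D)
    (hE : HomogeneouslyCoverable c E) : HomogeneouslyCoverable c (D ∪ E) := by
  obtain ⟨F, hF, hFhom, hFcov⟩ := hD
  obtain ⟨G, hG, hGhom, hGcov⟩ := hE
  refine ⟨F ∪ G, hF.union hG, fun P hP => hP.elim (hFhom P) (hGhom P), ?_⟩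
  rw [sUnion_union]
  exact union_subset_union hFcov hGcov

theorem HomogeneouslyCoverable.exists_isHomogeneous_fibres (hD : HomogeneouslyCoverable c D) :
    ∃ g : ℚ → Set ℚ, (g '' D).Finite ∧ ∀ q ∈ D, IsHomogeneous c (D ∩ g ⁻¹' {g q}) := by
  obtain ⟨F, hfin, hhom, hcov⟩ := hD
  choose! g hgF hmem using fun q (hq : q ∈ D) => mem_sUnion.1 (hcov hq)
  refine ⟨g, hfin.subset (image_subset_iff.2 hgF), fun q hq => (hhom _ (hgF q hq)).mono ?_⟩
  rintro r ⟨hr, hgr⟩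
  exact hgr ▸ hmem r hr

theorem exists_subinterval_coverable_biUnion {ι : Type*} (s : Finset ι) {C : ι → Set ℚ}
    {X Y : ℚ} (hXY : X < Y)
    (hC : ∀ i ∈ s, ∀ x y, X ≤ x → x < y → y ≤ Y →
      ∃ x' y', x ≤ x' ∧ x' < y' ∧ y' ≤ y ∧ HomogeneouslyCoverable c (C i ∩ Ioo x' y')) :
    ∃ x y, X ≤ x ∧ x < y ∧ y ≤ Y ∧ HomogeneouslyCoverable c ((⋃ i ∈ s, C i) ∩ Ioo x y) := by
  classical
  induction s using Finset.induction_on with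
  | empty => exact ⟨X, Y, le_rfl, hXY, le_rfl, ∅, finite_empty, by simp, by simp⟩
  | insert i s _ ih =>
    obtain ⟨x, y, hXx, hxy, hyY, hs⟩ := ih fun j hj => hC j (Finset.mem_insert_of_mem hj)
    obtain ⟨x', y', hxx', hxy', hyy', hi⟩ := hC i (Finset.mem_insert_self i s) x y hXx hxy hyY
    refine ⟨x', y', hXx.trans hxx', hxy', hyy'.trans hyY, ?_⟩
    rw [Finset.set_biUnion_insert, union_inter_distrib_right]
    exact hi.union (hs.mono (inter_subset_inter_right _ (Ioo_subset_Ioo hxx' hyy')))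

section Additive

variable [Mul S]

theorem IsAdditive.stabilizes_of_eq (hc : IsAdditive c) {d₀ a b d₁ : ℚ} (h₀ : d₀ < a)
    (hab : a < b) (h₁ : b < d₁)
    (hl : c d₀ b = c d₀ a) (hr : c b d₁ = c a d₁) :
    c d₀ a * c a b = c d₀ a ∧ c a b * c a d₁ = c a d₁ :=
  ⟨(hc _ _ _ h₀ hab).symm.trans hl, by rw [← hr, ← hc _ _ _ hab h₁, hr]⟩

theorem LocallyCoverable.of_erase_zero [DecidableEq S] (hc : IsAdditive c) {H : Finset S}
    {e : S} (he : ∀ u ∈ H, e * u = e ∧ u * e = e) (ih : LocallyCoverable c (H.erase e)) :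
    LocallyCoverable c H := by
  intro D X Y hXY hH
  by_cases hcol : colours c (D ∩ Ioo X Y) ⊆ {e}
  · exact ⟨X, Y, le_rfl, hXY, le_rfl,
      IsHomogeneous.homogeneouslyCoverable (subsingleton_singleton.anti hcol)⟩
  obtain ⟨_, ⟨a, ⟨haD, ha⟩, b, ⟨hbD, hb⟩, hab, rfl⟩, hne⟩ := not_subset.1 hcol
  have hsub : Ioo a b ⊆ Ioo X Y := Ioo_subset_Ioo ha.1.le hb.2.le
  have hcol' : colours c (D ∩ Ioo a b) ⊆ H.erase e := by
    rintro _ ⟨a', ⟨ha'D, ha'⟩, b', ⟨hb'D, hb'⟩, hab', rfl⟩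
    refine Finset.mem_erase.2
      ⟨fun hzero => hne ?_, hH ⟨a', ⟨ha'D, hsub ha'⟩, b', ⟨hb'D, hsub hb'⟩, hab', rfl⟩⟩
    have hleft := hH ⟨a, ⟨haD, ha⟩, a', ⟨ha'D, hsub ha'⟩, ha'.1, rfl⟩
    have hright := hH ⟨b', ⟨hb'D, hsub hb'⟩, b, ⟨hbD, hb⟩, hb'.2, rfl⟩
    rw [mem_singleton_iff, hc a a' b ha'.1 (hab'.trans hb'.2), hc a' b' b hab' hb'.2, hzero,
      (he _ hright).1, (he _ hleft).2]
  obtain ⟨x, y, hax, hxy, hyb, hcov⟩ := ih D a b hab hcol'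
  exact ⟨x, y, ha.1.le.trans hax, hxy, hyb.trans hb.2.le, hcov⟩

theorem locallyCoverable_filter_stabilizing [DecidableEq S] (hc : IsAdditive c) {H : Finset S}
    (ih : ∀ H' ⊂ H, LocallyCoverable c H') {s t : S} (hs : s ∈ H) (ht : t ∈ H) :
    LocallyCoverable c (H.filter fun u => s * u = s ∧ u * t = t) := by
  by_cases hlt : H.filter (fun u => s * u = s ∧ u * t = t) ⊂ H
  · exact ih _ hlt
  have hfix : ∀ u ∈ H, s * u = s ∧ u * t = t := by
    simpa [Finset.filter_ssubset] using hlt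
  have hts : t = s := (hfix s hs).2.symm.trans (hfix t ht).1
  subst hts
  rw [Finset.filter_true_of_mem hfix]
  exact LocallyCoverable.of_erase_zero hc hfix (ih _ (Finset.erase_ssubset ht))

theorem LocallyCoverable.of_forall_ssubset (hc : IsAdditive c) {H : Finset S}
    (ih : ∀ H' ⊂ H, LocallyCoverable c H') : LocallyCoverable c H := by
  classical
  intro D X Y hXY hH
  by_cases htwo : ∃ d₀ ∈ D ∩ Ioo X Y, ∃ d₁ ∈ D ∩ Ioo X Y, d₀ < d₁
  swap
  · push Not at htwo
    refine ⟨X, Y, le_rfl, hXY, le_rfl, IsHomogeneous.homogeneouslyCoverable ?_⟩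
    rintro _ ⟨a, ha, b, hb, hab, rfl⟩
    exact absurd hab (htwo a ha b hb).not_gt
  obtain ⟨d₀, ⟨hd₀D, hd₀⟩, d₁, ⟨hd₁D, hd₁⟩, hd⟩ := htwo
  have hsub : D ∩ Ioo d₀ d₁ ⊆ D ∩ Ioo X Y :=
    inter_subset_inter_right _ (Ioo_subset_Ioo hd₀.1.le hd₁.2.le)
  have hcolour : ∀ a ∈ D ∩ Ioo X Y, ∀ b ∈ D ∩ Ioo X Y, a < b → c a b ∈ H :=
    fun a ha b hb hab => hH ⟨a, ha, b, hb, hab, rfl⟩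
  let φ : ℚ → S × S := fun q => (c d₀ q, c q d₁)
  let C : S × S → Set ℚ := fun v => D ∩ Ioo d₀ d₁ ∩ φ ⁻¹' {v}
  have hC : ∀ v ∈ H ×ˢ H, ∀ x y, d₀ ≤ x → x < y → y ≤ d₁ →
      ∃ x' y', x ≤ x' ∧ x' < y' ∧ y' ≤ y ∧ HomogeneouslyCoverable c (C v ∩ Ioo x' y') := by
    rintro ⟨s, t⟩ hst x y - hxy -
    obtain ⟨hs, ht⟩ := Finset.mem_product.1 hst
    refine locallyCoverable_filter_stabilizing hc ih hs ht (C (s, t)) x y hxy ?_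
    rintro _ ⟨a, ⟨⟨ha, hφa⟩, -⟩, b, ⟨⟨hb, hφb⟩, -⟩, hab, rfl⟩
    simp only [mem_preimage, mem_singleton_iff, Prod.mk.injEq, φ] at hφa hφb
    obtain ⟨rfl, rfl⟩ := hφa
    rw [Finset.coe_filter]
    exact ⟨hcolour a (hsub ha) b (hsub hb) hab,
      hc.stabilizes_of_eq ha.2.1 hab hb.2.2 hφb.1 hφb.2⟩
  obtain ⟨x, y, hx, hxy, hy, hcov⟩ := exists_subinterval_coverable_biUnion (H ×ˢ H) hd hC
  refine ⟨x, y, hd₀.1.le.trans hx, hxy, hy.trans hd₁.2.le, hcov.mono ?_⟩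
  rintro q ⟨hqD, hq⟩
  have hq' : q ∈ D ∩ Ioo d₀ d₁ := ⟨hqD, Ioo_subset_Ioo hx hy hq⟩
  refine ⟨mem_biUnion (x := φ q) ?_ ⟨hq', rfl⟩, hq⟩
  exact Finset.mem_product.2
    ⟨hcolour d₀ ⟨hd₀D, hd₀⟩ q (hsub hq') hq'.2.1, hcolour q (hsub hq') d₁ ⟨hd₁D, hd₁⟩ hq'.2.2⟩

theorem locallyCoverable (hc : IsAdditive c) (H : Finset S) : LocallyCoverable c H :=
  H.strongInduction fun _ ih => LocallyCoverable.of_forall_ssubset hc ih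

end Additive

theorem DenseIn.Ioo_inter {x y : ℚ} (hD : DenseIn D x y) : DenseIn (Ioo x y ∩ D) x y :=
  fun a b hxa hab hby =>
    let ⟨z, hz, haz, hzb⟩ := hD a b hxa hab hby
    ⟨z, ⟨⟨hxa.trans haz, hzb.trans hby⟩, hz⟩, haz, hzb⟩

theorem exists_subinterval_denseIn_fibres {β : Type*} (φ : ℚ → β) {X Y : ℚ} (hXY : X < Y)
    (hφ : (φ '' Ioo X Y).Finite) :
    ∃ x y, X ≤ x ∧ x < y ∧ y ≤ Y ∧ ∀ q ∈ Ioo x y, DenseIn (φ ⁻¹' {φ q}) x y := by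
  obtain ⟨⟨x, y⟩, ⟨hXx, hxy, hyY⟩, hmin⟩ := exists_minimalFor_of_wellFoundedLT
    (fun p : ℚ × ℚ => X ≤ p.1 ∧ p.1 < p.2 ∧ p.2 ≤ Y) (fun p => (φ '' Ioo p.1 p.2).ncard)
    ⟨(X, Y), le_rfl, hXY, le_rfl⟩
  refine ⟨x, y, hXx, hxy, hyY, fun q hq a b hxa hab hby => ?_⟩
  have hsub : φ '' Ioo a b ⊆ φ '' Ioo x y := image_mono (Ioo_subset_Ioo hxa.le hby.le)
  have hfin : (φ '' Ioo x y).Finite := hφ.subset (image_mono (Ioo_subset_Ioo hXx hyY))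
  have heq : φ '' Ioo a b = φ '' Ioo x y := eq_of_subset_of_ncard_le hsub
    (@hmin (a, b) ⟨hXx.trans hxa.le, hab, hby.le.trans hyY⟩ (ncard_le_ncard hsub hfin)) hfin
  have hq' : φ q ∈ φ '' Ioo a b := heq ▸ mem_image_of_mem φ hq
  obtain ⟨r, hr, hφr⟩ := hq'
  exact ⟨r, hφr, hr⟩

theorem exists_fin_partition_fibres {α β : Type*} (φ : α → β) (I : Set α) (hφ : (φ '' I).Finite) :
    ∃ (k : ℕ) (D : Fin k → Set α), (∀ i, D i ⊆ I) ∧ (∀ q ∈ I, ∃! i, q ∈ D i) ∧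
      ∀ i, ∃ q ∈ I, D i = I ∩ φ ⁻¹' {φ q} := by
  have := hφ.to_subtype
  let e := Finite.equivFin (φ '' I)
  refine ⟨Nat.card (φ '' I), fun i => I ∩ φ ⁻¹' {(e.symm i : β)}, fun i => inter_subset_left,
    fun q hq => ⟨e ⟨φ q, mem_image_of_mem φ hq⟩, ?_, fun i hi => ?_⟩, fun i => ?_⟩
  · exact ⟨hq, by rw [mem_preimage, e.symm_apply_apply]; rfl⟩
  · rw [← e.apply_symm_apply i]
    exact congrArg e (Subtype.ext (mem_singleton_iff.1 hi.2).symm)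
  · obtain ⟨q, hq, hφq⟩ := (e.symm i).2
    exact ⟨q, hq, by rw [hφq]⟩

end

/-- additive Ramsey theorem over ℚ: for every additive colouring there is
an interval (x,y) partitioned into finitely many dense c-homogeneous sets. -/
theorem additive_ramsey_Q (S : Type*) [Semigroup S] [Fintype S]
    (c : ℚ → ℚ → S)
    (hadd : ∀ x y z : ℚ, x < y → y < z → c x z = c x y * c y z) :
    ∃ x y : ℚ, x < y ∧ ∃ (k : ℕ) (D : Fin k → Set ℚ),
      (∀ i, D i ⊆ Set.Ioo x y) ∧
      (∀ q ∈ Set.Ioo x y, ∃! i, q ∈ D i) ∧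
      (∀ i, ∀ a b : ℚ, x < a → a < b → b < y → ∃ z ∈ D i, a < z ∧ z < b) ∧
      (∀ i, ∀ a b a' b' : ℚ, a ∈ D i → b ∈ D i → a < b →
        a' ∈ D i → b' ∈ D i → a' < b' → c a b = c a' b') := by
  obtain ⟨x₁, y₁, -, hxy₁, -, hcov⟩ := locallyCoverable hadd Finset.univ univ 0 1 one_pos (by simp)
  rw [univ_inter] at hcov
  obtain ⟨g, hgfin, hghom⟩ := hcov.exists_isHomogeneous_fibres
  obtain ⟨x, y, hx, hxy, hy, hdense⟩ := exists_subinterval_denseIn_fibres g hxy₁ hgfin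
  have hsub : Ioo x y ⊆ Ioo x₁ y₁ := Ioo_subset_Ioo hx hy
  obtain ⟨k, D, hDsub, hpart, hfib⟩ :=
    exists_fin_partition_fibres g (Ioo x y) (hgfin.subset (image_mono hsub))
  refine ⟨x, y, hxy, k, D, hDsub, hpart, fun i => ?_, fun i => ?_⟩ <;>
    obtain ⟨q, hq, hDi⟩ := hfib i <;> rw [hDi]
  · exact (hdense q hq).Ioo_inter
  · exact fun a b a' b' => ((hghom q (hsub hq)).mono (inter_subset_inter_left _ hsub)).eq
end

section
/- Let S be a finite semigroup, H ⊆ S an H-class, and suppose there exist a, b ∈ H with a·b ∈ H. Then H contains an idempotent e and (H, ·) is a group with identity e. -/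
/-!
Since `b ≤_L ab`, left multiplication by `a` has a left inverse (multiplication by an element of
`S¹`) on everything `≤_R b`, so it is injective on `H` and maps `H` into `H`; by finiteness it is
a bijection of `H`, which yields `e ∈ H` with `ae = a`. Then `e` is a right identity on everything
`≤_L a`, hence idempotent and a two-sided identity on `H`, and the triple `x, e, xe` makes `H`
closed under multiplication. The bijection argument for the triple `x, x, x²` gives right
inverses, and right inverses in a monoid in which every element has one are two-sided.
-/

/-- Green's R-preorder. -/
def leR {S : Type*} [Semigroup S] (s t : S) : Prop := s = t ∨ ∃ a, s = t * a
/-- Green's L-preorder. -/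
def leL {S : Type*} [Semigroup S] (s t : S) : Prop := s = t ∨ ∃ a, s = a * t
/-- Green's H-equivalence. -/
def eqH {S : Type*} [Semigroup S] (s t : S) : Prop :=
  (leR s t ∧ leR t s) ∧ (leL s t ∧ leL t s)

section Green

variable {S : Type*} [Semigroup S]

theorem leR_trans {s t u : S} (hst : leR s t) (htu : leR t u) : leR s u := by
  rcases hst with rfl | ⟨p, rfl⟩
  · exact htu
  · rcases htu with rfl | ⟨q, rfl⟩
    · exact Or.inr ⟨p, rfl⟩
    · exact Or.inr ⟨q * p, mul_assoc _ _ _⟩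

theorem leL_trans {s t u : S} (hst : leL s t) (htu : leL t u) : leL s u := by
  rcases hst with rfl | ⟨p, rfl⟩
  · exact htu
  · rcases htu with rfl | ⟨q, rfl⟩
    · exact Or.inr ⟨p, rfl⟩
    · exact Or.inr ⟨p * q, (mul_assoc _ _ _).symm⟩

theorem leR_mul_right (x y : S) : leR (x * y) x := Or.inr ⟨y, rfl⟩

theorem leL_mul_left (x y : S) : leL (x * y) y := Or.inr ⟨x, rfl⟩

theorem leR.mul_left (c : S) {s t : S} (h : leR s t) : leR (c * s) (c * t) := by
  rcases h with rfl | ⟨p, rfl⟩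
  · exact Or.inl rfl
  · exact Or.inr ⟨p, (mul_assoc _ _ _).symm⟩

theorem mul_eq_of_leL {a e x : S} (hae : a * e = a) (hx : leL x a) : x * e = x := by
  rcases hx with rfl | ⟨p, rfl⟩
  · exact hae
  · rw [mul_assoc, hae]

theorem mul_eq_of_leR {a e x : S} (hea : e * a = a) (hx : leR x a) : e * x = x := by
  rcases hx with rfl | ⟨p, rfl⟩
  · exact hea
  · rw [← mul_assoc, hea]

theorem exists_leftInvOn_mul_left_of_leL {a b : S} (h : leL b (a * b)) :
    ∃ g : S → S, Set.LeftInvOn g (a * ·) {x | leR x b} ∧ ∀ y, leL (g y) y := by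
  rcases h with h | ⟨u, h⟩
  · exact ⟨id, fun _ hx => mul_eq_of_leR h.symm hx, fun _ => Or.inl rfl⟩
  · refine ⟨(u * ·), fun x hx => ?_, leL_mul_left u⟩
    simpa only [mul_assoc] using (mul_eq_of_leR (e := u * a) (by rw [mul_assoc, ← h]) hx)

theorem injOn_mul_left_of_leL {a b : S} (h : leL b (a * b)) :
    Set.InjOn (a * ·) {x | leR x b} :=
  let ⟨_, hg, _⟩ := exists_leftInvOn_mul_left_of_leL h
  hg.injOn

theorem leL_mul_left_self_of_leL {a b x : S} (h : leL b (a * b)) (hx : leR x b) :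
    leL x (a * x) := by
  obtain ⟨g, hg, hgle⟩ := exists_leftInvOn_mul_left_of_leL h
  simpa only [hg hx] using hgle (a * x)

def Hclass (w : S) : Set S := {x | eqH x w}

section Hclass

variable {w : S}

theorem leR_of_mem_Hclass {x y : S} (hx : x ∈ Hclass w) (hy : y ∈ Hclass w) : leR x y :=
  leR_trans hx.1.1 hy.1.2

theorem leL_of_mem_Hclass {x y : S} (hx : x ∈ Hclass w) (hy : y ∈ Hclass w) : leL x y :=
  leL_trans hx.2.1 hy.2.2

theorem mem_Hclass_of_le {x y₁ y₂ y₃ y₄ : S} (hy₁ : y₁ ∈ Hclass w) (hy₂ : y₂ ∈ Hclass w)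
    (hy₃ : y₃ ∈ Hclass w) (hy₄ : y₄ ∈ Hclass w) (h₁ : leR x y₁) (h₂ : leR y₂ x)
    (h₃ : leL x y₃) (h₄ : leL y₄ x) : x ∈ Hclass w :=
  ⟨⟨leR_trans h₁ hy₁.1.1, leR_trans hy₂.1.2 h₂⟩, leL_trans h₃ hy₃.2.1, leL_trans hy₄.2.2 h₄⟩

theorem mul_mem_Hclass {a b x : S} (ha : a ∈ Hclass w) (hb : b ∈ Hclass w)
    (hab : a * b ∈ Hclass w) (hx : x ∈ Hclass w) : a * x ∈ Hclass w := by
  exact mem_Hclass_of_le ha hab hx hx (leR_mul_right a x)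
    ((leR_of_mem_Hclass hb hx).mul_left a) (leL_mul_left a x)
    (leL_mul_left_self_of_leL (leL_of_mem_Hclass hb hab) (leR_of_mem_Hclass hx hb))

theorem exists_mem_Hclass_mul_left_eq [Finite S] {a b y : S} (ha : a ∈ Hclass w)
    (hb : b ∈ Hclass w) (hab : a * b ∈ Hclass w) (hy : y ∈ Hclass w) :
    ∃ x ∈ Hclass w, a * x = y := by
  have hmaps : Set.MapsTo (a * ·) (Hclass w) (Hclass w) := fun _ hx => mul_mem_Hclass ha hb hab hx
  have hinj : Set.InjOn (a * ·) (Hclass w) :=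
    (injOn_mul_left_of_leL (leL_of_mem_Hclass hb hab)).mono fun _ hx => leR_of_mem_Hclass hx hb
  exact ((Set.toFinite _).injOn_iff_bijOn_of_mapsTo hmaps |>.mp hinj).surjOn hy

end Hclass

end Green

/-- if H is an H-class of a finite semigroup containing a, b with a·b ∈ H,
then H is a group: it contains an idempotent identity, is closed under multiplication,
and has inverses. -/
theorem Hclass_group (S : Type*) [Semigroup S] [Fintype S] (H : Set S)
    (hclass : ∃ w : S, H = {x | eqH x w})
    (a b : S) (ha : a ∈ H) (hb : b ∈ H) (hab : a * b ∈ H) :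
    ∃ e ∈ H, e * e = e ∧
      (∀ x ∈ H, ∀ y ∈ H, x * y ∈ H) ∧
      (∀ x ∈ H, e * x = x ∧ x * e = x) ∧
      (∀ x ∈ H, ∃ y ∈ H, x * y = e ∧ y * x = e) := by
  obtain ⟨w, rfl⟩ := hclass
  obtain ⟨e, he, hae⟩ := exists_mem_Hclass_mul_left_eq ha hb hab ha
  have mul_e : ∀ x ∈ Hclass w, x * e = x := fun x hx => mul_eq_of_leL hae (leL_of_mem_Hclass hx ha)
  have hee : e * e = e := mul_e e he
  have e_mul : ∀ x ∈ Hclass w, e * x = x := fun x hx => mul_eq_of_leR hee (leR_of_mem_Hclass hx he)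
  have hmul : ∀ x ∈ Hclass w, ∀ y ∈ Hclass w, x * y ∈ Hclass w := fun x hx y hy =>
    mul_mem_Hclass hx he ((mul_e x hx).symm ▸ hx) hy
  refine ⟨e, he, hee, hmul, fun x hx => ⟨e_mul x hx, mul_e x hx⟩, fun x hx => ?_⟩
  obtain ⟨y, hy, hxy⟩ := exists_mem_Hclass_mul_left_eq hx hx (hmul x hx x hx) he
  obtain ⟨z, hz, hyz⟩ := exists_mem_Hclass_mul_left_eq hy hy (hmul y hy y hy) he
  have hxz : x = z := by
    calc x = x * (y * z) := by rw [hyz, mul_e x hx]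
      _ = z := by rw [← mul_assoc, hxy, e_mul z hz]
  exact ⟨y, hy, hxy, hxz ▸ hyz⟩
end

section
/- Let S be a finite semigroup and s, t ∈ S. If s ≤_L t and s is R-equivalent to t, then s is H-equivalent to t. -/
section

variable {S : Type*} [Semigroup S]

/-- Finite semigroups are compact in the discrete topology, so this is Ellis–Numakura. -/
theorem Subsemigroup.exists_isIdempotentElem_mem [Finite S] (T : Subsemigroup S)
    (hT : (T : Set S).Nonempty) : ∃ e ∈ T, IsIdempotentElem e := by
  let _ : TopologicalSpace S := ⊥
  have : DiscreteTopology S := ⟨rfl⟩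
  exact exists_idempotent_in_compact_subsemigroup (fun _ => continuous_of_discreteTopology)
    (T : Set S) hT (Set.toFinite _).isCompact fun _ hx _ hy => T.mul_mem hx hy

theorem leL.mul_left {u a : S} (c : S) (h : leL u a) : leL (c * u) a := by
  rcases h with rfl | ⟨d, rfl⟩
  · exact Or.inr ⟨c, rfl⟩
  · exact Or.inr ⟨c * d, (mul_assoc c d a).symm⟩

def principalLeftIdeal (a : S) : Subsemigroup S where
  carrier := {u | leL u a}
  mul_mem' _ hv := hv.mul_left _

def leftSandwichers (t : S) : Subsemigroup S where
  carrier := {u | ∃ v, u * t * v = t}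
  mul_mem' := by
    rintro u₁ u₂ ⟨v₁, hv₁⟩ ⟨v₂, hv₂⟩
    refine ⟨v₂ * v₁, ?_⟩
    calc u₁ * u₂ * t * (v₂ * v₁) = u₁ * (u₂ * t * v₂) * v₁ := by simp only [mul_assoc]
      _ = t := by rw [hv₂, hv₁]

theorem IsIdempotentElem.mul_eq_of_mem_leftSandwichers {e t : S} (he : IsIdempotentElem e)
    (het : e ∈ leftSandwichers t) : e * t = t := by
  obtain ⟨v, hv⟩ := het
  calc e * t = e * (e * t * v) := by rw [hv]
    _ = e * t * v := by simp only [← mul_assoc, he.eq]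
    _ = t := hv

end

/-- in a finite semigroup, s ≤_L t together with s R t implies s H t. -/
theorem leL_R_imp_H (S : Type*) [Semigroup S] [Fintype S] (s t : S)
    (hL : leL s t) (hR : leR s t ∧ leR t s) :
    (leR s t ∧ leR t s) ∧ (leL s t ∧ leL t s) := by
  refine ⟨hR, hL, ?_⟩
  rcases hL with rfl | ⟨a, rfl⟩
  · exact Or.inl rfl
  rcases hR.2 with hat | ⟨b, hb⟩
  · exact Or.inl hat
  have ha : a ∈ principalLeftIdeal a ⊓ leftSandwichers t := ⟨Or.inl rfl, b, hb.symm⟩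
  obtain ⟨e, ⟨hea, he_mem⟩, he⟩ :=
    (principalLeftIdeal a ⊓ leftSandwichers t).exists_isIdempotentElem_mem ⟨a, ha⟩
  have het : e * t = t := he.mul_eq_of_mem_leftSandwichers he_mem
  rcases hea with rfl | ⟨c, rfl⟩
  · exact Or.inl het.symm
  · exact Or.inr ⟨c, by rw [← mul_assoc, het]⟩
end

section
/- Let (P, ≤) be a finite partial order and c : {(m,n) ∈ ℕ × ℕ | m < n} → P a right-ordered colouring, meaning c(x,y) ≤ c(x,y') whenever x < y ≤ y'. Then there exists an infinite set X ⊆ ℕ such that c is constant on pairs from X. -/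
/-!
For fixed `x` the colours `c x y` increase with `y` in a finite poset, so they are eventually
constant, equal to a limit colour of `x`. By pigeonhole some colour `p` is the limit colour of
infinitely many `x`; among these choose `x₀ < x₁ < ⋯`, each past the point where the colours of
all earlier ones have stabilized. Every pair from this sequence then has colour `p`.
-/

theorem exists_forall_ge_eq_of_monotoneOn_Ioi {α : Type*} [PartialOrder α] [WellFoundedGT α]
    {f : ℕ → α} {a : ℕ} (hf : MonotoneOn f (Set.Ioi a)) :
    ∃ n, a < n ∧ ∀ m, n ≤ m → f m = f n := by
  obtain ⟨k, hk⟩ := WellFoundedGT.monotone_chain_condition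
    ⟨fun k => f (a + 1 + k), fun i j hij =>
      hf (Set.mem_Ioi.2 (by omega)) (Set.mem_Ioi.2 (by omega)) (by omega)⟩
  refine ⟨a + 1 + k, by omega, fun m hm => ?_⟩
  obtain ⟨j, rfl⟩ := Nat.exists_eq_add_of_le hm
  have hj : f (a + 1 + k) = f (a + 1 + (k + j)) := hk (k + j) (by omega)
  rw [hj, add_assoc]

theorem Set.Infinite.exists_seq_mem_and_le_of_lt {S : Set ℕ} (hS : S.Infinite) (N : ℕ → ℕ) :
    ∃ u : ℕ → ℕ, (∀ n, u n ∈ S) ∧ ∀ m n, m < n → N (u m) ≤ u n :=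
  exists_seq_of_forall_finset_exists (· ∈ S) (fun x y => N x ≤ y) fun s _ => by
    obtain ⟨y, hyS, hy⟩ := hS.exists_gt (s.sup N)
    exact ⟨y, hyS, fun x hx => (Finset.le_sup hx).trans hy.le⟩

/-- ordered Ramsey theorem over ℕ: every right-ordered colouring of pairs
of naturals by a finite poset admits an infinite homogeneous set. -/
theorem ordered_ramsey_N (P : Type*) [PartialOrder P] [Fintype P]
    (c : ℕ → ℕ → P)
    (hord : ∀ x y y' : ℕ, x < y → y ≤ y' → c x y ≤ c x y') :
    ∃ X : Set ℕ, X.Infinite ∧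
      ∀ x ∈ X, ∀ y ∈ X, ∀ x' ∈ X, ∀ y' ∈ X,
        x < y → x' < y' → c x y = c x' y' := by
  choose N hxN hN using fun x =>
    exists_forall_ge_eq_of_monotoneOn_Ioi (f := c x) fun y hy y' _ hyy' => hord x y y' hy hyy'
  obtain ⟨p, hp⟩ := Finite.exists_infinite_fiber fun x => c x (N x)
  obtain ⟨u, hu, hNu⟩ := (Set.infinite_coe_iff.mp hp).exists_seq_mem_and_le_of_lt N
  have hu_mono : StrictMono u := fun m n hmn => (hxN _).trans_le (hNu m n hmn)
  have hcu : ∀ m n, m < n → c (u m) (u n) = p := fun m n hmn =>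
    (hN _ _ (hNu m n hmn)).trans (hu m)
  refine ⟨Set.range u, Set.infinite_range_of_injective hu_mono.injective, ?_⟩
  rintro _ ⟨i, rfl⟩ _ ⟨j, rfl⟩ _ ⟨i', rfl⟩ _ ⟨j', rfl⟩ hij hij'
  rw [hcu i j (hu_mono.lt_iff_lt.mp hij), hcu i' j' (hu_mono.lt_iff_lt.mp hij')]
end

section
/- Let S be a finite semigroup and c : {(m,n) ∈ ℕ × ℕ | m < n} → S an additive colouring, i.e. c(x,z) = c(x,y)·c(y,z) whenever x < y < z. Then there exists an infinite set X ⊆ ℕ such that c is constant on pairs from X, and the common value is an idempotent of S. -/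
/-!
By the infinite Ramsey theorem for pairs, `c` is constant, say equal to `e`, on the pairs of
some infinite set `X`; additivity is needed only afterwards: for `x < y < z` in `X` it gives
`e = c x z = c x y * c y z = e * e`.

Ramsey's theorem is proved by the usual refinement: inside an infinite set `A`, the colours
`c (sInf A) b` take some value on an infinite set of `b > sInf A`. Iterating yields `a₀ < a₁ < ⋯`
with `c (a m) (a n)` depending on `m` only, and a colour repeated infinitely often among these
values gives `X`.
-/

open Set Function

theorem Set.Infinite.exists_infinite_inter_preimage_singleton {α β : Type*} [Finite α]
    {A : Set β} (hA : A.Infinite) (f : β → α) : ∃ s, (A ∩ f ⁻¹' {s}).Infinite := by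
  by_contra! h
  exact hA <| (finite_iUnion h).subset
    fun b hb => mem_iUnion.2 ⟨f b, hb, rfl⟩

section Ramsey

variable {α : Type*} [Finite α]

theorem exists_infinite_subset_forall_sInf_lt_colour_eq (c : ℕ → ℕ → α) {A : Set ℕ}
    (hA : A.Infinite) :
    ∃ B ⊆ A, B.Infinite ∧ ∃ s, ∀ b ∈ B, sInf A < b ∧ c (sInf A) b = s := by
  obtain ⟨s, hs⟩ := (hA.sdiff (finite_singleton (sInf A))).exists_infinite_inter_preimage_singleton
    (c (sInf A))
  refine ⟨_, fun b hb => hb.1.1, hs, s, fun b ⟨⟨hbA, hbne⟩, hbs⟩ => ⟨?_, hbs⟩⟩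
  exact (Nat.sInf_le hbA).lt_of_ne (Ne.symm hbne)

theorem exists_forall_lt_colour_eq (c : ℕ → ℕ → α) :
    ∃ (a : ℕ → ℕ) (s : ℕ → α), ∀ m n, m < n → a m < a n ∧ c (a m) (a n) = s m := by
  choose! step hsub hinf s hs using fun (A : Set ℕ) (hA : A.Infinite) =>
    exists_infinite_subset_forall_sInf_lt_colour_eq c hA
  let R : ℕ → Set ℕ := fun n => step^[n] univ
  have hR_succ (n : ℕ) : R (n + 1) = step (R n) := iterate_succ_apply' step n univ
  have hR (n : ℕ) : (R n).Infinite := by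
    induction n with
    | zero => exact infinite_univ
    | succ n ih => rw [hR_succ]; exact hinf _ ih
  have hanti : Antitone R := antitone_nat_of_succ_le fun n => by
    rw [hR_succ]; exact hsub _ (hR n)
  refine ⟨fun n => sInf (R n), fun n => s (R n) (hR n), fun m n hmn => hs _ (hR m) _ ?_⟩
  rw [← hR_succ]
  exact hanti hmn (Nat.sInf_mem (hR n).nonempty)

theorem exists_infinite_forall_lt_colour_eq (c : ℕ → ℕ → α) :
    ∃ X : Set ℕ, X.Infinite ∧ ∃ e, ∀ x ∈ X, ∀ y ∈ X, x < y → c x y = e := by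
  obtain ⟨a, s, h⟩ := exists_forall_lt_colour_eq c
  have ha : StrictMono a := fun m n hmn => (h m n hmn).1
  obtain ⟨e, he⟩ := Finite.exists_infinite_fiber s
  refine ⟨a '' (s ⁻¹' {e}), (infinite_coe_iff.1 he).image ha.injective.injOn, e, ?_⟩
  rintro _ ⟨m, hm, rfl⟩ _ ⟨n, -, rfl⟩ hmn
  rw [(h m n (ha.lt_iff_lt.1 hmn)).2]
  exact hm

end Ramsey

theorem isIdempotentElem_of_forall_lt_colour_eq {S : Type*} [Semigroup S] {c : ℕ → ℕ → S}
    (hadd : ∀ x y z : ℕ, x < y → y < z → c x z = c x y * c y z) {X : Set ℕ} (hX : X.Infinite)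
    {e : S} (he : ∀ x ∈ X, ∀ y ∈ X, x < y → c x y = e) : IsIdempotentElem e := by
  obtain ⟨x, hx⟩ := hX.nonempty
  obtain ⟨y, hy, hxy⟩ := hX.exists_gt x
  obtain ⟨z, hz, hyz⟩ := hX.exists_gt y
  calc e * e = c x y * c y z := by rw [he x hx y hy hxy, he y hy z hz hyz]
    _ = c x z := (hadd x y z hxy hyz).symm
    _ = e := he x hx z hz (hxy.trans hyz)

/-- additive Ramsey theorem over ℕ: every additive colouring of pairs of
naturals by a finite semigroup admits an infinite homogeneous set whose colour is
idempotent. -/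
theorem additive_ramsey_N (S : Type*) [Semigroup S] [Fintype S]
    (c : ℕ → ℕ → S)
    (hadd : ∀ x y z : ℕ, x < y → y < z → c x z = c x y * c y z) :
    ∃ (X : Set ℕ) (e : S), X.Infinite ∧ e * e = e ∧
      ∀ x ∈ X, ∀ y ∈ X, x < y → c x y = e := by
  obtain ⟨X, hX, e, he⟩ := exists_infinite_forall_lt_colour_eq c
  exact ⟨X, e, hX, isIdempotentElem_of_forall_lt_colour_eq hadd hX he, he⟩
end

section
/- Let c : {(m,n) ∈ ℕ × ℕ | m < n} → P be a right-ordered colouring into a finite poset P. Say a colour p occurs after n if there exist n ≤ m < k with c(m,k) = p. Then there exists n₀ such that every colour occurring after n₀ occurs after n for every n; moreover, for any ≤_P-maximal colour p occurring after n₀ (among colours occurring after n₀), there is an infinite c-homogeneous set with colour p. -/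
/-!
The sets of colours occurring after `n` form a decreasing sequence of subsets of the finite
set `P`, so they stabilise from some `n₀` on. Each row `y ↦ c x y` is monotone in a finite
poset, hence eventually constant. If `p` is maximal among the colours occurring after `n₀`,
then every row `m ≥ n₀` in which `p` occurs has eventual colour `≥ p`, hence `= p`; since `p`
occurs arbitrarily far out, there are infinitely many rows that are eventually `p`, and a
greedy choice of such rows, each beyond the stabilisation points of the earlier ones, yields
the homogeneous set.
-/

open Filter

section

variable {P : Type*}

def RightOrdered [Preorder P] (c : ℕ → ℕ → P) : Prop :=
  ∀ x y y' : ℕ, x < y → y ≤ y' → c x y ≤ c x y'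

def occursAfter (c : ℕ → ℕ → P) (n : ℕ) : Set P :=
  {p | ∃ m k, n ≤ m ∧ m < k ∧ c m k = p}

theorem occursAfter_antitone (c : ℕ → ℕ → P) : Antitone (occursAfter c) := by
  rintro n n' hn p ⟨m, k, hm, hk, rfl⟩
  exact ⟨m, k, hn.trans hm, hk, rfl⟩

theorem exists_occursAfter_subset_forall [Finite P] (c : ℕ → ℕ → P) :
    ∃ n₀, ∀ n, occursAfter c n₀ ⊆ occursAfter c n := by
  obtain ⟨n₀, hn₀⟩ := WellFoundedLT.antitone_chain_condition (occursAfter_antitone c)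
  refine ⟨n₀, fun n => ?_⟩
  rcases le_total n n₀ with h | h
  · exact occursAfter_antitone c h
  · exact (hn₀ n h).subset

theorem RightOrdered.exists_eventually_eq [PartialOrder P] [WellFoundedGT P]
    {c : ℕ → ℕ → P} (hc : RightOrdered c) (x : ℕ) : ∃ q, ∀ᶠ y in atTop, c x y = q := by
  let row : ℕ →o P := ⟨fun i => c x (x + 1 + i), fun i j hij => hc _ _ _ (by omega) (by omega)⟩
  obtain ⟨n, hn⟩ := WellFoundedGT.monotone_chain_condition row
  refine ⟨row n, eventually_atTop.2 ⟨x + 1 + n, fun y hy => ?_⟩⟩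
  rw [hn (y - (x + 1)) (by omega)]
  show c x y = c x (x + 1 + (y - (x + 1)))
  congr
  omega

theorem RightOrdered.frequently_eventually_eq_of_maximal [PartialOrder P] [WellFoundedGT P]
    {c : ℕ → ℕ → P} (hc : RightOrdered c) {n₀ : ℕ} {p : P}
    (hp : ∀ n, p ∈ occursAfter c n) (hmax : ∀ q ∈ occursAfter c n₀, p ≤ q → p = q) :
    ∃ᶠ m in atTop, ∀ᶠ y in atTop, c m y = p := by
  refine frequently_atTop.2 fun n => ?_
  obtain ⟨m, k, hm, hmk, rfl⟩ := hp (max n n₀)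
  obtain ⟨q, hq⟩ := hc.exists_eventually_eq m
  obtain ⟨y, hyq, hy⟩ := (hq.and (eventually_ge_atTop k)).exists
  have hq_occurs : q ∈ occursAfter c n₀ := ⟨m, y, le_of_max_le_right hm, hmk.trans_le hy, hyq⟩
  have hpq : c m k = q := hmax q hq_occurs (hyq ▸ hc m k y hmk hy)
  exact ⟨m, le_of_max_le_left hm, hpq ▸ hq⟩

theorem exists_infinite_pairwise_of_frequently_eventually {R : ℕ → ℕ → Prop}
    (h : ∃ᶠ m in atTop, ∀ᶠ y in atTop, R m y) :
    ∃ X : Set ℕ, X.Infinite ∧ ∀ x ∈ X, ∀ y ∈ X, x < y → R x y := by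
  choose m hm hR using frequently_atTop.1 h
  choose N hN using fun a => eventually_atTop.1 (hR a)
  -- `m (v i)` is the `i`-th chosen row; `v (i + 1)` lies beyond it and beyond its threshold.
  let v : ℕ → ℕ := fun i => Nat.rec 0 (fun _ a => max (m a + 1) (N a)) i
  have hv : ∀ i, v (i + 1) = max (m (v i) + 1) (N (v i)) := fun _ => rfl
  have hv_mono : StrictMono v := strictMono_nat_of_lt_succ fun i => by
    have := hm (v i)
    rw [hv]
    omega
  have hmv_mono : StrictMono (m ∘ v) := strictMono_nat_of_lt_succ fun i => by
    have := hm (v (i + 1))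
    simp only [Function.comp_apply, hv] at this ⊢
    omega
  refine ⟨Set.range (m ∘ v), Set.infinite_range_of_injective hmv_mono.injective, ?_⟩
  rintro _ ⟨i, rfl⟩ _ ⟨j, rfl⟩ hij
  show R (m (v i)) (m (v j))
  apply hN
  have h_succ_le : v (i + 1) ≤ v j := hv_mono.monotone (hmv_mono.lt_iff_lt.1 hij)
  have := hm (v j)
  rw [hv] at h_succ_le
  omega

end

/-- for a right-ordered colouring of pairs of naturals by a finite poset,
there is n₀ such that every colour occurring after n₀ occurs arbitrarily far, and every
≤-maximal such colour is the colour of an infinite homogeneous set. -/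
theorem ordered_ramsey_N_maximal_colour (P : Type*) [PartialOrder P] [Fintype P]
    (c : ℕ → ℕ → P)
    (hord : ∀ x y y' : ℕ, x < y → y ≤ y' → c x y ≤ c x y') :
    ∃ n₀ : ℕ,
      (∀ p : P, (∃ m k, n₀ ≤ m ∧ m < k ∧ c m k = p) →
        ∀ n : ℕ, ∃ m k, n ≤ m ∧ m < k ∧ c m k = p) ∧
      (∀ p : P, (∃ m k, n₀ ≤ m ∧ m < k ∧ c m k = p) →
        (∀ q : P, (∃ m k, n₀ ≤ m ∧ m < k ∧ c m k = q) → p ≤ q → p = q) →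
        ∃ X : Set ℕ, X.Infinite ∧ ∀ x ∈ X, ∀ y ∈ X, x < y → c x y = p) := by
  obtain ⟨n₀, hn₀⟩ := exists_occursAfter_subset_forall c
  refine ⟨n₀, fun p hp n => hn₀ n hp, fun p hp hmax => ?_⟩
  exact exists_infinite_pairwise_of_frequently_eventually
    (RightOrdered.frequently_eventually_eq_of_maximal hord (fun n => hn₀ n hp) hmax)
end
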